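/- arXiv:2509.13283 — 5 statements merged into one kernel-verified Lean document; each statement's English description precedes it below -/
import Mathlib

section
/- For any type Q in the set of empirical measures with denominator n on a finite alphabet of size k, and any fixed block length m ≤ n, the total variation distance between the conditional law of (X_1,...,X_m) given that the empirical measure P_n equals Q (i.e., the multivariate hypergeometric sampling-without-replacement law) and the i.i.d. product law Q^⊗m is at most m(m-1)/(2n). -/
open Finset

/-!
Let `w(x) = ∏ⱼ (c j)(c j - 1)⋯(c j - #x⁻¹(j) + 1)` be the number of ways of drawing the colour
sequence `x` without replacement from an urn holding `c j` balls of colour `j`. These weights sum to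
`n(n-1)⋯(n-m+1)` and satisfy `w(x) ≤ ∏ᵢ c(xᵢ)`, so the product law dominates `t` times the
hypergeometric law, where `t = n(n-1)⋯(n-m+1) / nᵐ`. Domination by `t` times a probability vector
bounds the total variation by `1 - t = 1 - ∏_{i<m} (1 - i/n) ≤ ∑_{i<m} i/n = m(m-1)/(2n)`.
-/

theorem half_sum_abs_sub_le_of_mul_le {ι : Type*} [Fintype ι] {p q : ι → ℝ} {t : ℝ}
    (hp : ∀ x, 0 ≤ p x) (ht : t ≤ 1) (hsum : ∑ x, p x = ∑ x, q x)
    (hq : ∀ x, t * p x ≤ q x) :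
    (1 / 2 : ℝ) * ∑ x, |p x - q x| ≤ (1 - t) * ∑ x, p x := by
  have abs_eq_two_mul_max (a : ℝ) : |a| = 2 * max a 0 - a := by
    rcases le_total a 0 with h | h
    · rw [abs_of_nonpos h, max_eq_right h]; ring
    · rw [abs_of_nonneg h, max_eq_left h]; ring
  have hpos (x : ι) : max (p x - q x) 0 ≤ (1 - t) * p x :=
    max_le (by linarith [hq x]) (mul_nonneg (sub_nonneg.2 ht) (hp x))
  have hcancel : ∑ x, (p x - q x) = 0 := by rw [sum_sub_distrib, hsum, sub_self]
  calc (1 / 2 : ℝ) * ∑ x, |p x - q x|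
      = ∑ x, max (p x - q x) 0 := by
        simp only [abs_eq_two_mul_max, sum_sub_distrib, ← mul_sum] at hcancel ⊢
        linarith
    _ ≤ (1 - t) * ∑ x, p x := by
        rw [mul_sum]; exact sum_le_sum fun x _ => hpos x

theorem Nat.descFactorial_succ_eq_mul_pred (c t : ℕ) :
    c.descFactorial (t + 1) = c * (c - 1).descFactorial t := by
  cases c with
  | zero => simp
  | succ c => rw [Nat.succ_descFactorial_succ, Nat.add_sub_cancel]

theorem one_sub_descFactorial_div_pow_le {n : ℕ} (hn : 0 < n) (m : ℕ) :
    1 - (n.descFactorial m : ℝ) / n ^ m ≤ m * (m - 1) / (2 * n) := by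
  induction m with
  | zero => simp
  | succ m ih =>
    have hnR : (0 : ℝ) < n := by exact_mod_cast hn
    have hstep : (n.descFactorial (m + 1) : ℝ) / n ^ (m + 1)
        = ((n - m : ℕ) : ℝ) / n * ((n.descFactorial m : ℝ) / n ^ m) := by
      rw [Nat.descFactorial_succ, Nat.cast_mul, pow_succ]; ring
    set d : ℝ := (n.descFactorial m : ℝ) / n ^ m
    have hd0 : 0 ≤ d := by positivity
    have hd1 : d ≤ 1 := by
      rw [div_le_one (by positivity)]; exact_mod_cast Nat.descFactorial_le_pow n m
    have hfactor : (1 - m / n : ℝ) * d ≤ ((n - m : ℕ) : ℝ) / n * d := by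
      rw [one_sub_div hnR.ne']
      gcongr
      exact sub_le_iff_le_add.2 (by exact_mod_cast (le_tsub_add : n ≤ n - m + m))
    have hloss : (m / n : ℝ) * d ≤ m / n := mul_le_of_le_one_right (by positivity) hd1
    have hrhs : ((m + 1 : ℕ) : ℝ) * ((m + 1 : ℕ) - 1) / (2 * n)
        = m * (m - 1) / (2 * n) + m / n := by
      push_cast; field_simp; ring
    rw [hstep, hrhs]
    linarith

section HypergeometricWeight

variable {ι : Type*} [DecidableEq ι]

theorem card_filter_cons_apply_eq {m : ℕ} (a : ι) (g : Fin m → ι) (j : ι) :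
    #{i | (Fin.cons a g : Fin (m + 1) → ι) i = j} = #{i | g i = j} + if a = j then 1 else 0 := by
  simp only [card_filter, Fin.sum_univ_succ, Fin.cons_zero, Fin.cons_succ]
  ring

variable [Fintype ι]

def hypergeometricWeight (c : ι → ℕ) {m : ℕ} (x : Fin m → ι) : ℕ :=
  ∏ j, (c j).descFactorial #{i | x i = j}

theorem hypergeometricWeight_cons (c : ι → ℕ) {m : ℕ} (a : ι) (g : Fin m → ι) :
    hypergeometricWeight c (Fin.cons a g : Fin (m + 1) → ι)
      = c a * hypergeometricWeight (Function.update c a (c a - 1)) g := by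
  unfold hypergeometricWeight
  rw [Fintype.prod_eq_mul_prod_compl a, Fintype.prod_eq_mul_prod_compl a, ← mul_assoc,
    card_filter_cons_apply_eq, if_pos rfl, Nat.descFactorial_succ_eq_mul_pred, Function.update_self]
  congr 1
  refine prod_congr rfl fun j hj => ?_
  have hja : j ≠ a := by simpa using hj
  rw [card_filter_cons_apply_eq, if_neg hja.symm, add_zero, Function.update_of_ne hja]

theorem sum_hypergeometricWeight (m : ℕ) (c : ι → ℕ) :
    ∑ x : Fin m → ι, hypergeometricWeight c x = (∑ j, c j).descFactorial m := by
  induction m generalizing c with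
  | zero => simp [hypergeometricWeight]
  | succ m ih =>
    have hpred (a : ι) :
        c a * (∑ j, Function.update c a (c a - 1) j).descFactorial m
          = c a * (∑ j, c j - 1).descFactorial m := by
      rcases Nat.eq_zero_or_pos (c a) with h0 | hpos
      · simp [h0]
      · rw [sum_update_of_mem (mem_univ a), sdiff_singleton_eq_erase,
          ← add_sum_erase _ _ (mem_univ a)]
        congr 3
        omega
    rw [← (Fin.consEquiv fun _ => ι).sum_comp, Fintype.sum_prod_type]
    simp only [Fin.consEquiv, Equiv.coe_fn_mk, hypergeometricWeight_cons, ← mul_sum, ih, hpred]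
    rw [← sum_mul, Nat.descFactorial_succ_eq_mul_pred]

theorem hypergeometricWeight_le_prod (c : ι → ℕ) {m : ℕ} (x : Fin m → ι) :
    hypergeometricWeight c x ≤ ∏ i, c (x i) :=
  calc hypergeometricWeight c x ≤ ∏ j, c j ^ #{i | x i = j} :=
        prod_le_prod' fun j _ => Nat.descFactorial_le_pow _ _
    _ = ∏ i, c (x i) := by
        rw [← prod_fiberwise' univ x c]
        exact prod_congr rfl fun j _ => (prod_const _).symm

end HypergeometricWeight

/-- hypergeometric (sampling-without-replacement) block law vs. i.i.d.
product law: total variation bound m(m-1)/(2n). -/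
theorem hypergeometric_to_product_tv_bound
    (k n m : ℕ) (hn : 0 < n) (hm : m ≤ n)
    (c : Fin k → ℕ) (hc : ∑ j, c j = n) :
    (1 / 2 : ℝ) *
        ∑ x : Fin m → Fin k,
          |(∏ j, ((c j).descFactorial ((univ.filter (fun i : Fin m => x i = j)).card) : ℝ)) /
              (n.descFactorial m : ℝ)
            - ∏ i, (c (x i) : ℝ) / (n : ℝ)|
      ≤ (m : ℝ) * ((m : ℝ) - 1) / (2 * (n : ℝ)) := by
  have hnR : (0 : ℝ) < n := by exact_mod_cast hn
  have hA : (0 : ℝ) < n.descFactorial m := by exact_mod_cast Nat.descFactorial_pos.2 hm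
  have hweight (x : Fin m → Fin k) :
      ∏ j, ((c j).descFactorial #{i | x i = j} : ℝ) = hypergeometricWeight c x := by
    rw [hypergeometricWeight, Nat.cast_prod]
  simp only [hweight]
  have hsum_hyper :
      ∑ x : Fin m → Fin k, (hypergeometricWeight c x : ℝ) / n.descFactorial m = 1 := by
    rw [← sum_div, ← Nat.cast_sum, sum_hypergeometricWeight, hc, div_self hA.ne']
  have hsum_prod : ∑ x : Fin m → Fin k, ∏ i, (c (x i) : ℝ) / n = 1 := by
    rw [← Fintype.prod_sum fun _ j => (c j : ℝ) / n, ← sum_div, ← Nat.cast_sum, hc,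
      div_self hnR.ne', prod_const_one]
  have ht : (n.descFactorial m : ℝ) / n ^ m ≤ 1 := by
    rw [div_le_one (by positivity)]
    exact_mod_cast Nat.descFactorial_le_pow n m
  have hdom (x : Fin m → Fin k) :
      (n.descFactorial m : ℝ) / n ^ m * ((hypergeometricWeight c x : ℝ) / n.descFactorial m)
        ≤ ∏ i, (c (x i) : ℝ) / n := by
    rw [div_mul_div_comm, mul_comm, mul_div_mul_right _ _ hA.ne', prod_div_distrib, prod_const,
      card_univ, Fintype.card_fin]
    gcongr
    exact_mod_cast hypergeometricWeight_le_prod c x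
  refine (half_sum_abs_sub_le_of_mul_le (fun _ => by positivity) ht
    (hsum_hyper.trans hsum_prod.symm) hdom).trans ?_
  rw [hsum_hyper, mul_one]
  exact one_sub_descFactorial_div_pow_le hn m
end

section
/- The number of sequences of length n over a k-letter alphabet whose empirical type equals Q ∈ 𝒫_n satisfies (n+1)^{-k} · exp(n H(Q)) ≤ |𝒯(Q)| ≤ exp(n H(Q)), where 𝒯(Q) is the type class of Q and H is Shannon entropy (natural logarithm). -/
/-!
Write `n = ∑ j, c j` and expand `n ^ n = (∑ j, c j) ^ n` by the multinomial theorem. The type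
class is an orbit of the permutations of positions, so its size is the multinomial coefficient
`n! / ∏ j, (c j)!`, while `exp (n H(Q)) = n ^ n / ∏ j, c j ^ c j`. The upper bound says that the
term of the expansion indexed by `c` is at most the whole sum. For the lower bound, that term is
the largest of at most `(n + 1) ^ k` terms, because `t ↦ a ^ t / t!` peaks at `t = a`.
-/

open Finset Equiv MulAction
open scoped Nat

variable {ι α : Type*} [Fintype ι] [DecidableEq α]

def counts (x : ι → α) (a : α) : ℕ := #{i | x i = a}

lemma counts_comp_perm (x : ι → α) (σ : Perm ι) : counts (x ∘ σ) = counts x := by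
  ext a
  simp only [counts, ← Fintype.card_subtype]
  exact Fintype.card_congr (σ.subtypeEquiv fun _ => Iff.rfl)

lemma exists_perm_comp_eq_of_counts_eq {x y : ι → α} (h : counts y = counts x) :
    ∃ σ : Perm ι, x ∘ σ = y :=
  ⟨Equiv.ofFiberEquiv fun a => Fintype.equivOfCardEq (by
      simpa only [counts, Fintype.card_subtype] using congrFun h a),
    funext (Equiv.ofFiberEquiv_map _)⟩

lemma exists_counts_eq [Fintype α] (e : α → ℕ) (he : ∑ a, e a = Fintype.card ι) :
    ∃ x : ι → α, counts x = e := by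
  let f : ι ≃ Σ a, Fin (e a) := Fintype.equivOfCardEq (by simp [he])
  refine ⟨fun i => (f i).1, funext fun a => ?_⟩
  simp only [counts, ← Fintype.card_subtype]
  rw [Fintype.card_congr
    ((f.subtypeEquivOfSubtype (p := fun s => s.1 = a)).trans (sigmaSubtype a)), Fintype.card_fin]

variable [DecidableEq ι] [Fintype α]

variable (ι) in
def typeClass (e : α → ℕ) : Finset (ι → α) := {x | counts x = e}

lemma orbit_domMulAct_eq_typeClass (x : ι → α) :
    orbit (Perm ι)ᵈᵐᵃ x = (typeClass ι (counts x) : Set (ι → α)) := by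
  ext y
  simp only [mem_orbit_iff, typeClass, coe_filter, mem_univ, true_and, Set.mem_ofPred_eq]
  constructor
  · rintro ⟨g, rfl⟩
    exact counts_comp_perm x (DomMulAct.mk.symm g)
  · intro h
    obtain ⟨σ, rfl⟩ := exists_perm_comp_eq_of_counts_eq h
    exact ⟨DomMulAct.mk σ, rfl⟩

lemma card_stabilizer_domMulAct_eq_prod_factorial (x : ι → α) :
    Nat.card (stabilizer (Perm ι)ᵈᵐᵃ x) = ∏ a, (counts x a)! := by
  have e : {σ : Perm ι // x ∘ σ = x} ≃ stabilizer (Perm ι)ᵈᵐᵃ x :=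
    subtypeEquiv DomMulAct.mk fun _ => Iff.rfl
  rw [← Nat.card_congr e, Nat.card_eq_fintype_card, DomMulAct.stabilizer_card]
  simp only [counts, Fintype.card_subtype]

theorem card_typeClass_mul_prod_factorial (x : ι → α) :
    #(typeClass ι (counts x)) * ∏ a, (counts x a)! = (Fintype.card ι)! := by
  rw [← card_stabilizer_domMulAct_eq_prod_factorial, ← Set.ncard_coe_finset,
    ← orbit_domMulAct_eq_typeClass, ← index_stabilizer, mul_comm, Subgroup.card_mul_index,
    Nat.card_congr DomMulAct.mk.symm, Nat.card_perm, Nat.card_eq_fintype_card]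

theorem card_typeClass_eq_multinomial (e : α → ℕ) (he : ∑ a, e a = Fintype.card ι) :
    #(typeClass ι e) = Nat.multinomial univ e := by
  obtain ⟨x, rfl⟩ := exists_counts_eq e he
  have h := card_typeClass_mul_prod_factorial x
  rw [← he, ← Nat.multinomial_spec, mul_comm] at h
  exact Nat.eq_of_mul_eq_mul_left (prod_pos fun a _ => Nat.factorial_pos _) h

namespace Nat

theorem pow_mul_factorial_le_pow_self_mul_factorial (a b : ℕ) : a ^ b * a ! ≤ a ^ a * b ! := by
  rcases le_total b a with h | h
  · calc a ^ b * a ! = a ^ b * (b ! * a.descFactorial (a - b)) := by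
          rw [← factorial_mul_descFactorial (sub_le a b), Nat.sub_sub_self h]
      _ ≤ a ^ b * (b ! * a ^ (a - b)) := by gcongr; exact descFactorial_le_pow a _
      _ = a ^ a * b ! := by rw [← Nat.add_sub_cancel' h, pow_add, Nat.add_sub_cancel' h]; ring
  · calc a ^ b * a ! = a ^ a * (a ! * a ^ (b - a)) := by
          rw [mul_comm (a !), ← mul_assoc, ← pow_add, Nat.add_sub_cancel' h]
      _ ≤ a ^ a * (a ! * (a + 1) ^ (b - a)) := by gcongr; omega
      _ ≤ a ^ a * b ! := by
          gcongr
          simpa [Nat.add_sub_cancel' h] using factorial_mul_pow_le_factorial (m := a) (n := b - a)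

variable {α : Type*} [Fintype α]

theorem multinomial_mul_prod_pow_le (c e : α → ℕ) (he : ∑ a, e a = ∑ a, c a) :
    multinomial univ e * ∏ a, c a ^ e a ≤ multinomial univ c * ∏ a, c a ^ c a := by
  have hprod : (∑ a, c a)! * ∏ a, (c a ^ e a * (c a)!)
      ≤ (∑ a, c a)! * ∏ a, (c a ^ c a * (e a)!) := by
    gcongr (∑ a, c a)! * ?_
    exact prod_le_prod' fun a _ => pow_mul_factorial_le_pow_self_mul_factorial _ _
  rw [prod_mul_distrib, prod_mul_distrib] at hprod
  have hpos : 0 < (∏ a, (e a)!) * ∏ a, (c a)! := by positivity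
  refine Nat.le_of_mul_le_mul_right ?_ hpos
  calc (multinomial univ e * ∏ a, c a ^ e a) * ((∏ a, (e a)!) * ∏ a, (c a)!)
      = ((∏ a, (e a)!) * multinomial univ e) * ((∏ a, c a ^ e a) * ∏ a, (c a)!) := by ring
    _ ≤ ((∏ a, (c a)!) * multinomial univ c) * ((∏ a, c a ^ c a) * ∏ a, (e a)!) := by
        rw [multinomial_spec, multinomial_spec, he]; exact hprod
    _ = (multinomial univ c * ∏ a, c a ^ c a) * ((∏ a, (e a)!) * ∏ a, (c a)!) := by ring

variable [DecidableEq α]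

theorem multinomial_mul_prod_pow_self_le (c : α → ℕ) :
    multinomial univ c * ∏ a, c a ^ c a ≤ (∑ a, c a) ^ ∑ a, c a := by
  rw [sum_pow_eq_sum_piAntidiag]
  exact single_le_sum (f := fun e => multinomial univ e * ∏ a, c a ^ e a)
    (fun _ _ => by positivity) (by simp)

theorem card_piAntidiag_univ_le (n : ℕ) :
    #(piAntidiag (univ : Finset α) n) ≤ (n + 1) ^ Fintype.card α := by
  calc #(piAntidiag univ n) ≤ #(Fintype.piFinset fun _ : α => range (n + 1)) := by
        refine card_le_card fun e he => ?_
        rw [Fintype.mem_piFinset]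
        intro a
        rw [mem_range, Nat.lt_succ_iff, ← (mem_piAntidiag.1 he).1]
        exact single_le_sum (fun a _ => Nat.zero_le (e a)) (mem_univ a)
    _ = (n + 1) ^ Fintype.card α := by simp

theorem pow_le_mul_multinomial_mul_prod_pow_self (c : α → ℕ) :
    (∑ a, c a) ^ ∑ a, c a
      ≤ (∑ a, c a + 1) ^ Fintype.card α * (multinomial univ c * ∏ a, c a ^ c a) := by
  rw [sum_pow_eq_sum_piAntidiag]
  calc ∑ e ∈ piAntidiag univ (∑ a, c a), multinomial univ e * ∏ a, c a ^ e a
      ≤ ∑ _e ∈ piAntidiag univ (∑ a, c a), multinomial univ c * ∏ a, c a ^ c a :=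
        sum_le_sum fun e he => multinomial_mul_prod_pow_le c e (mem_piAntidiag.1 he).1
    _ ≤ _ := by rw [sum_const, smul_eq_mul]; gcongr; exact card_piAntidiag_univ_le _

end Nat

namespace Real

theorem exp_natCast_mul_log_self (m : ℕ) : exp (m * log m) = (m : ℝ) ^ m := by
  rcases m.eq_zero_or_pos with rfl | hm
  · simp
  · rw [exp_nat_mul, exp_log (by positivity)]

lemma natCast_mul_mul_log_div {m n : ℕ} (h : m ≤ n) :
    (n : ℝ) * ((m / n) * log (m / n)) = m * log m - m * log n := by
  rcases m.eq_zero_or_pos with rfl | hm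
  · simp
  have hn : (n : ℝ) ≠ 0 := by exact_mod_cast (hm.trans_le h).ne'
  rw [log_div (by exact_mod_cast hm.ne') hn, ← mul_assoc, mul_div_cancel₀ _ hn, mul_sub]

theorem exp_mul_neg_sum_mul_log_div {α : Type*} [Fintype α] (c : α → ℕ) {n : ℕ}
    (hc : ∑ a, c a = n) :
    exp (n * -∑ a, (c a / n : ℝ) * log (c a / n)) = (n : ℝ) ^ n / ∏ a, (c a : ℝ) ^ c a := by
  have hsum :
      n * -∑ a, (c a / n : ℝ) * log (c a / n) = n * log n - ∑ a, c a * log (c a) := by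
    rw [mul_neg, mul_sum, sum_congr rfl fun a _ =>
      natCast_mul_mul_log_div (hc ▸ single_le_sum (fun _ _ => Nat.zero_le _) (mem_univ a)),
      sum_sub_distrib, ← sum_mul]
    push_cast [← hc]
    ring
  simp only [hsum, exp_sub, exp_sum, exp_natCast_mul_log_self]

end Real

theorem type_class_cardinality_bounds_general
    (k n : ℕ)
    (c : Fin k → ℕ) (hc : ∑ j, c j = n) :
    ((n : ℝ) + 1)⁻¹ ^ k *
        Real.exp ((n : ℝ) * (-∑ j, ((c j : ℝ) / n) * Real.log ((c j : ℝ) / n)))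
      ≤ ((univ.filter
            (fun x : Fin n → Fin k => ∀ j, (univ.filter (fun i => x i = j)).card = c j)).card : ℝ)
    ∧ ((univ.filter
            (fun x : Fin n → Fin k => ∀ j, (univ.filter (fun i => x i = j)).card = c j)).card : ℝ)
      ≤ Real.exp ((n : ℝ) * (-∑ j, ((c j : ℝ) / n) * Real.log ((c j : ℝ) / n))) := by
  have hclass : univ.filter (fun x : Fin n → Fin k => ∀ j, #{i | x i = j} = c j)
      = typeClass (Fin n) c := by
    simp only [typeClass, counts, funext_iff]
  have hP : ∏ j, (c j : ℝ) ^ c j = ((∏ j, c j ^ c j : ℕ) : ℝ) := by push_cast; rfl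
  have hPpos : 0 < ∏ j, c j ^ c j := prod_pos fun j _ => Nat.pow_self_pos
  rw [hclass, card_typeClass_eq_multinomial c (by simpa using hc),
    Real.exp_mul_neg_sum_mul_log_div c hc, hP]
  constructor
  · rw [inv_pow, inv_mul_le_iff₀ (by positivity), div_le_iff₀ (by exact_mod_cast hPpos)]
    have hlower := Nat.pow_le_mul_multinomial_mul_prod_pow_self c
    rw [hc, Fintype.card_fin, ← mul_assoc] at hlower
    exact_mod_cast hlower
  · rw [le_div_iff₀ (by exact_mod_cast hPpos)]
    have hupper := Nat.multinomial_mul_prod_pow_self_le c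
    rw [hc] at hupper
    exact_mod_cast hupper

/-- the size of the type class of a type `Q = (c j / n)_j` on a `k`-letter
alphabet satisfies `(n+1)^{-k} exp(n H(Q)) ≤ |𝒯(Q)| ≤ exp(n H(Q))`, where `H` is the
Shannon entropy with natural logarithm. -/
theorem type_class_cardinality_bounds
    (k n : ℕ) (hn : 0 < n)
    (c : Fin k → ℕ) (hc : ∑ j, c j = n) :
    ((n : ℝ) + 1)⁻¹ ^ k *
        Real.exp ((n : ℝ) * (-∑ j, ((c j : ℝ) / n) * Real.log ((c j : ℝ) / n)))
      ≤ ((univ.filter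
            (fun x : Fin n → Fin k => ∀ j, (univ.filter (fun i => x i = j)).card = c j)).card : ℝ)
    ∧ ((univ.filter
            (fun x : Fin n → Fin k => ∀ j, (univ.filter (fun i => x i = j)).card = c j)).card : ℝ)
      ≤ Real.exp ((n : ℝ) * (-∑ j, ((c j : ℝ) / n) * Real.log ((c j : ℝ) / n))) :=
  type_class_cardinality_bounds_general k n c hc
end

section
/- (Pythagorean inequality for I-projection) If P* is the I-projection of a strictly positive P onto a closed convex set E in the simplex over a finite alphabet, then for every Q ∈ E, D(Q‖P) ≥ D(Q‖P*) + D(P*‖P). -/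
/-!
Perturb `P⋆` towards `Q` along the segment `R_t = P⋆ + t (Q - P⋆)`, which stays in `E`.
Expanding `u log u` to second order around `P⋆` gives
`D(R_t‖P) - D(P⋆‖P) ≤ t (b log t + c) + t² K`, where `b` is the mass of `Q` outside the support
of `P⋆` and `c = ∑ (Q - P⋆) log (P⋆ / P)`. Minimality of `P⋆` makes the left side nonnegative;
dividing by `t` and letting `t → 0⁺` forces `b = 0` and `c ≥ 0`. Once `Q` is supported on the
support of `P⋆`, `c` is exactly `D(Q‖P) - D(Q‖P⋆) - D(P⋆‖P)`.
-/

open Finset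

/-- KL divergence on a finite alphabet (convention `0 log 0 = 0` holds automatically
since `Real.log 0 = 0`). -/
noncomputable def klDiv' {k : ℕ} (Q P : Fin k → ℝ) : ℝ :=
  ∑ x, Q x * Real.log (Q x / P x)

/-- The probability simplex on `Fin k`. -/
def simplex (k : ℕ) : Set (Fin k → ℝ) :=
  {Q | (∀ x, 0 ≤ Q x) ∧ ∑ x, Q x = 1}

open Filter Topology Real

lemma eq_zero_and_nonneg_of_eventually_nonneg_mul_log_add {b c K : ℝ} (hb : 0 ≤ b)
    (h : ∀ᶠ t in 𝓝[>] 0, 0 ≤ b * log t + c + t * K) : b = 0 ∧ 0 ≤ c := by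
  have hlin : Tendsto (fun t : ℝ => c + t * K) (𝓝[>] 0) (𝓝 c) := by
    have : Tendsto (fun t : ℝ => c + t * K) (𝓝 0) (𝓝 (c + 0 * K)) :=
      tendsto_const_nhds.add (tendsto_id.mul_const K)
    simpa using this.mono_left nhdsWithin_le_nhds
  have hb0 : b = 0 := by
    by_contra hne
    have hbot : Tendsto (fun t => b * log t + (c + t * K)) (𝓝[>] 0) atBot :=
      (tendsto_log_nhdsGT_zero.const_mul_atBot (hb.lt_of_ne' hne)).atBot_add hlin
    have hneg := hbot.eventually (eventually_lt_atBot 0)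
    obtain ⟨t, ht, hneg⟩ := (h.and hneg).exists
    linarith
  refine ⟨hb0, ge_of_tendsto hlin ?_⟩
  simpa [hb0] using h

lemma mul_log_sub_mul_log_le {s u : ℝ} (hs : 0 < s) (hu : 0 ≤ u) :
    u * log u - s * log s ≤ (u - s) * (log s + 1) + (u - s) ^ 2 / s := by
  rcases hu.eq_or_lt with rfl | hu
  · have hsq : (0 - s) ^ 2 / s = s := by rw [zero_sub, neg_sq]; field_simp
    rw [hsq]
    simp only [zero_mul, zero_sub]
    linarith
  have hlog : u * log (u / s) ≤ u * (u / s - 1) :=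
    mul_le_mul_of_nonneg_left (log_le_sub_one_of_pos (div_pos hu hs)) hu.le
  rw [log_div hu.ne' hs.ne'] at hlog
  have hquad : (u - s) ^ 2 / s = u * (u / s - 1) - (u - s) := by
    field_simp
  rw [hquad]
  linarith

/-- At `s = 0` the junk values `log 0 = 0` and `x / 0 = 0` turn the last two terms into
`t * q` and `0`; the bound then holds because `q log q ≤ 0 ≤ q`. -/
lemma mul_log_line_sub_le {s q t : ℝ} (hs : 0 ≤ s) (hq : 0 ≤ q) (hq1 : q ≤ 1) (ht : 0 < t)
    (ht1 : t ≤ 1) :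
    (s + t * (q - s)) * log (s + t * (q - s)) - s * log s ≤
      t * ((if s = 0 then q else 0) * log t + (q - s) * (log s + 1)) +
        t ^ 2 * ((q - s) ^ 2 / s) := by
  rcases hs.eq_or_lt with rfl | hs
  · rcases hq.eq_or_lt with rfl | hq
    · simp
    have hqlog : q * log q ≤ 0 := mul_log_nonpos hq.le hq1
    simp only [sub_zero, zero_add, if_true, log_zero, div_zero, mul_zero, add_zero,
      log_mul ht.ne' hq.ne']
    nlinarith
  have hu : 0 ≤ s + t * (q - s) := by nlinarith
  have := mul_log_sub_mul_log_le hs hu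
  rw [if_neg hs.ne']
  convert this using 1
  ring

variable {k : ℕ}

lemma klDiv'_eq_sum_mul_log_sub {R P : Fin k → ℝ} (hP : ∀ x, P x ≠ 0) :
    klDiv' R P = ∑ x, (R x * log (R x) - R x * log (P x)) := by
  refine sum_congr rfl fun x _ => ?_
  rcases eq_or_ne (R x) 0 with hR | hR
  · simp [hR]
  · rw [log_div hR (hP x)]
    ring

lemma le_one_of_mem_simplex {Q : Fin k → ℝ} (hQ : Q ∈ simplex k) (x : Fin k) : Q x ≤ 1 :=
  hQ.2 ▸ single_le_sum (fun y _ => hQ.1 y) (mem_univ x)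

lemma klDiv'_line_sub_le {s q P : Fin k → ℝ} (hs : s ∈ simplex k) (hq : q ∈ simplex k)
    (hP : ∀ x, P x ≠ 0) {t : ℝ} (ht : 0 < t) (ht1 : t ≤ 1) :
    klDiv' (s + t • (q - s)) P - klDiv' s P ≤
      t * ((∑ x, if s x = 0 then q x else 0) * log t +
          ∑ x, (q x - s x) * (log (s x) - log (P x))) +
        t ^ 2 * ∑ x, (q x - s x) ^ 2 / s x := by
  have hmass : ∑ x, (q x - s x) = 0 := by
    rw [sum_sub_distrib, hq.2, hs.2, sub_self]
  calc klDiv' (s + t • (q - s)) P - klDiv' s P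
      = ∑ x, ((s x + t * (q x - s x)) * log (s x + t * (q x - s x)) - s x * log (s x)
          - t * (q x - s x) * log (P x)) := by
        rw [klDiv'_eq_sum_mul_log_sub hP, klDiv'_eq_sum_mul_log_sub hP, ← sum_sub_distrib]
        refine sum_congr rfl fun x _ => ?_
        simp only [Pi.add_apply, Pi.smul_apply, Pi.sub_apply, smul_eq_mul]
        ring
    _ ≤ ∑ x, (t * ((if s x = 0 then q x else 0) * log t + (q x - s x) * (log (s x) + 1))
          + t ^ 2 * ((q x - s x) ^ 2 / s x) - t * (q x - s x) * log (P x)) :=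
        sum_le_sum fun x _ => sub_le_sub_right
          (mul_log_line_sub_le (hs.1 x) (hq.1 x) (le_one_of_mem_simplex hq x) ht ht1) _
    _ = t * ((∑ x, if s x = 0 then q x else 0) * log t +
          ∑ x, (q x - s x) * (log (s x) - log (P x))) +
        t ^ 2 * ∑ x, (q x - s x) ^ 2 / s x + t * ∑ x, (q x - s x) := by
        simp only [mul_add, mul_sum, sum_mul, ← sum_add_distrib]
        refine sum_congr rfl fun x _ => ?_
        ring
    _ = _ := by rw [hmass, mul_zero, add_zero]

lemma support_subset_and_sum_nonneg_of_klDiv'_le_line {s q P : Fin k → ℝ}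
    (hs : s ∈ simplex k) (hq : q ∈ simplex k) (hP : ∀ x, P x ≠ 0)
    (hmin : ∀ t ∈ Set.Ioo (0 : ℝ) 1, klDiv' s P ≤ klDiv' (s + t • (q - s)) P) :
    (∀ x, s x = 0 → q x = 0) ∧ 0 ≤ ∑ x, (q x - s x) * (log (s x) - log (P x)) := by
  have hbound : ∀ᶠ t in 𝓝[>] 0, 0 ≤ (∑ x, if s x = 0 then q x else 0) * log t +
      ∑ x, (q x - s x) * (log (s x) - log (P x)) + t * ∑ x, (q x - s x) ^ 2 / s x := by
    filter_upwards [Ioo_mem_nhdsGT zero_lt_one] with t ht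
    have hineq := (sub_nonneg.2 (hmin t ht)).trans (klDiv'_line_sub_le hs hq hP ht.1 ht.2.le)
    rw [pow_two, mul_assoc, ← mul_add] at hineq
    exact nonneg_of_mul_nonneg_right hineq ht.1
  have hoff : ∀ x, 0 ≤ if s x = 0 then q x else 0 := fun x => ite_nonneg (hq.1 x) le_rfl
  obtain ⟨hmass, hfirst⟩ :=
    eq_zero_and_nonneg_of_eventually_nonneg_mul_log_add (sum_nonneg fun x _ => hoff x) hbound
  refine ⟨fun x hx => ?_, hfirst⟩
  simpa [hx] using (sum_eq_zero_iff_of_nonneg fun y _ => hoff y).1 hmass x (mem_univ x)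

lemma klDiv'_sub_klDiv'_sub_klDiv' {s q P : Fin k → ℝ} (hP : ∀ x, P x ≠ 0)
    (hsupp : ∀ x, s x = 0 → q x = 0) :
    klDiv' q P - klDiv' q s - klDiv' s P = ∑ x, (q x - s x) * (log (s x) - log (P x)) := by
  unfold klDiv'
  rw [← sum_sub_distrib, ← sum_sub_distrib]
  refine sum_congr rfl fun x _ => ?_
  by_cases hs : s x = 0
  · simp [hs, hsupp x hs]
  by_cases hq : q x = 0
  · simp [hq, log_div hs (hP x)]
  rw [log_div hq (hP x), log_div hq hs, log_div hs (hP x)]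
  ring

theorem I_projection_pythagorean_inequality_general
    (k : ℕ) (P : Fin k → ℝ) (hP : ∀ x, 0 < P x)
    (E : Set (Fin k → ℝ)) (hEsub : E ⊆ simplex k)
    (hEconv : Convex ℝ E)
    (Pstar : Fin k → ℝ) (hPstarE : Pstar ∈ E)
    (hmin : ∀ Q ∈ E, klDiv' Pstar P ≤ klDiv' Q P) :
    ∀ Q ∈ E, klDiv' Q Pstar + klDiv' Pstar P ≤ klDiv' Q P := by
  intro Q hQ
  have hP' : ∀ x, P x ≠ 0 := fun x => (hP x).ne'
  have hline : ∀ t ∈ Set.Ioo (0 : ℝ) 1, klDiv' Pstar P ≤ klDiv' (Pstar + t • (Q - Pstar)) P :=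
    fun t ht => hmin _ (hEconv.add_smul_sub_mem hPstarE hQ ⟨ht.1.le, ht.2.le⟩)
  obtain ⟨hsupp, hfirst⟩ :=
    support_subset_and_sum_nonneg_of_klDiv'_le_line (hEsub hPstarE) (hEsub hQ) hP' hline
  have hpyth := klDiv'_sub_klDiv'_sub_klDiv' hP' hsupp
  linarith

/-- Csiszár's Pythagorean inequality: if `P⋆` is the I-projection of the
strictly positive `P` onto the nonempty closed convex `E ⊆ Δ(𝒳)`, then for every
`Q ∈ E`, `D(Q‖P) ≥ D(Q‖P⋆) + D(P⋆‖P)`. -/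
theorem I_projection_pythagorean_inequality
    (k : ℕ) (P : Fin k → ℝ) (hP : ∀ x, 0 < P x) (hPsum : ∑ x, P x = 1)
    (E : Set (Fin k → ℝ)) (hE : E.Nonempty) (hEsub : E ⊆ simplex k)
    (hEclosed : IsClosed E) (hEconv : Convex ℝ E)
    (Pstar : Fin k → ℝ) (hPstarE : Pstar ∈ E)
    (hmin : ∀ Q ∈ E, klDiv' Pstar P ≤ klDiv' Q P) :
    ∀ Q ∈ E, klDiv' Q Pstar + klDiv' Pstar P ≤ klDiv' Q P :=
  I_projection_pythagorean_inequality_general k P hP E hEsub hEconv Pstar hPstarE hmin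
end

section
/- Let X_1, X_2, ... be i.i.d. Bernoulli(θ) with 0 < θ < 3/4, and condition on the event E_n = {(1/n)∑_{i=1}^n X_i ≥ 3/4}. Then Pr(X_1 = 1 | E_n) → 3/4 as n → ∞; i.e., the conditional law of X_1 converges to Bernoulli(3/4), the I-projection of Bernoulli(θ) onto {Q : E_Q[X] ≥ 3/4}. -/
open Finset Filter
open scoped Topology

/-!
By exchangeability of the coordinates, `n · P(X₁ = 1, E_n) = E[S_n; E_n]`, so the conditional
probability is `E[S_n | S_n ≥ 3n/4] / n`, a ratio of sums of the binomial weights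
`b_k = C(n,k) θ^k (1-θ)^(n-k)` over `k ≥ m = ⌈3n/4⌉`. For `k ≥ 3n/4` the ratio
`b_{k+1} / b_k = (n-k) θ / ((k+1)(1-θ))` is at most `r = θ / (3(1-θ)) < 1`, so the overshoot
`E[S_n - m | S_n ≥ m]` is at most `r / (1-r)²`, uniformly in `n`. Hence the conditional mean of
`S_n / n` lies between `3/4` and `3/4 + O(1/n)`.
-/

noncomputable def binomialWeight (θ : ℝ) (n k : ℕ) : ℝ := n.choose k * θ ^ k * (1 - θ) ^ (n - k)

section BernoulliProduct

variable {α : Type*} [Fintype α] [DecidableEq α]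

theorem sum_fun_bool_eq_sum_finset {M : Type*} [AddCommMonoid M] (g : Finset α → M) :
    ∑ x : α → Bool, g {i | x i = true} = ∑ s : Finset α, g s :=
  Fintype.sum_equiv (κ := Finset α)
    { toFun := fun x : α → Bool => {i | x i = true}
      invFun := fun (s : Finset α) i => decide (i ∈ s)
      left_inv := fun x => by ext i; simp
      right_inv := fun s => by ext i; simp } _ _ fun _ => rfl

theorem prod_ite_mem_eq_pow_mul_pow {M : Type*} [CommMonoid M] (s : Finset α) (p q : M) :
    ∏ i, (if i ∈ s then p else q) = p ^ #s * q ^ (Fintype.card α - #s) := by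
  rw [prod_ite, filter_mem_eq_inter, univ_inter, filter_not, filter_mem_eq_inter, univ_inter,
    ← compl_eq_univ_sdiff, prod_const, prod_const, card_compl]

theorem card_mul_sum_filter_mem {R : Type*} [CommSemiring R] (i : α) (f : ℕ → R) :
    Fintype.card α * ∑ s with i ∈ s, f #s = ∑ s : Finset α, #s * f #s := by
  have swap_invariant : ∀ j : α, ∑ s with j ∈ s, f #s = ∑ s with i ∈ s, f #s := fun j =>
    sum_equiv (Equiv.finsetCongr (Equiv.swap j i)) (by simp [mem_map_equiv]) (by simp)
  calc Fintype.card α * ∑ s with i ∈ s, f #s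
      = ∑ j : α, ∑ s with j ∈ s, f #s := by
        simp only [swap_invariant, sum_const, card_univ, nsmul_eq_mul]
    _ = ∑ s : Finset α, ∑ j ∈ s, f #s := by
        simp only [sum_filter]; rw [sum_comm]; simp [sum_ite_mem]
    _ = ∑ s : Finset α, #s * f #s := by simp [sum_const, nsmul_eq_mul]

theorem sum_prod_bernoulli_filter_card (θ : ℝ) (P : ℕ → Prop) [DecidablePred P] :
    ∑ x : α → Bool with P #{i | x i = true}, ∏ i, (if x i then θ else 1 - θ)
      = ∑ k ∈ range (Fintype.card α + 1) with P k, binomialWeight θ (Fintype.card α) k := by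
  have h := sum_fun_bool_eq_sum_finset
    (fun s : Finset α => if P #s then ∏ i, (if i ∈ s then θ else 1 - θ) else 0)
  simp only [mem_filter, mem_univ, true_and] at h
  rw [sum_filter, h, ← sum_filter, ← powerset_univ]
  simp only [prod_ite_mem_eq_pow_mul_pow]
  rw [sum_filter, sum_powerset_apply_card
    (fun k => if P k then θ ^ k * (1 - θ) ^ (Fintype.card α - k) else 0), sum_filter, card_univ]
  refine sum_congr rfl fun k _ => ?_
  split_ifs <;> simp [binomialWeight, mul_assoc]

theorem card_mul_sum_prod_bernoulli_filter_mem_and (θ : ℝ) (P : ℕ → Prop) [DecidablePred P]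
    (j : α) :
    Fintype.card α * ∑ x : α → Bool with x j = true ∧ P #{i | x i = true},
        ∏ i, (if x i then θ else 1 - θ)
      = ∑ k ∈ range (Fintype.card α + 1) with P k, k * binomialWeight θ (Fintype.card α) k := by
  have h := sum_fun_bool_eq_sum_finset
    (fun s : Finset α => if j ∈ s ∧ P #s then ∏ i, (if i ∈ s then θ else 1 - θ) else 0)
  simp only [mem_filter, mem_univ, true_and] at h
  rw [sum_filter, h, ← sum_filter]
  simp only [prod_ite_mem_eq_pow_mul_pow]
  rw [← filter_filter, sum_filter, card_mul_sum_filter_mem j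
    (fun k => if P k then θ ^ k * (1 - θ) ^ (Fintype.card α - k) else 0), ← powerset_univ,
    sum_powerset_apply_card
      (fun k => k * if P k then θ ^ k * (1 - θ) ^ (Fintype.card α - k) else 0 : ℕ → ℝ),
    sum_filter, card_univ]
  refine sum_congr rfl fun k _ => ?_
  split_ifs <;> simp [binomialWeight]
  ring

end BernoulliProduct

theorem binomialWeight_nonneg {θ : ℝ} (hθ0 : 0 ≤ θ) (hθ1 : θ ≤ 1) (n k : ℕ) :
    0 ≤ binomialWeight θ n k := by
  have := sub_nonneg.2 hθ1
  unfold binomialWeight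
  positivity

theorem binomialWeight_pos {θ : ℝ} (hθ0 : 0 < θ) (hθ1 : θ < 1) {n k : ℕ} (hk : k ≤ n) :
    0 < binomialWeight θ n k := by
  have := sub_pos.2 hθ1
  have := Nat.choose_pos hk
  unfold binomialWeight
  positivity

theorem succ_mul_one_sub_mul_binomialWeight_succ (θ : ℝ) {n k : ℕ} (hkn : k < n) :
    (k + 1) * (1 - θ) * binomialWeight θ n (k + 1) = (n - k) * θ * binomialWeight θ n k := by
  have hchoose : (n.choose (k + 1) : ℝ) * (k + 1) = n.choose k * (n - k) := by
    rw [← Nat.cast_sub hkn.le]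
    exact_mod_cast Nat.choose_succ_right_eq n k
  unfold binomialWeight
  rw [show n - k = n - (k + 1) + 1 by omega, pow_succ, pow_succ]
  linear_combination θ ^ k * θ * (1 - θ) ^ (n - (k + 1)) * (1 - θ) * hchoose

theorem binomialWeight_succ_le {θ a : ℝ} (hθ0 : 0 ≤ θ) (hθ1 : θ < 1) (ha0 : 0 < a) (ha1 : a ≤ 1)
    {n k : ℕ} (hk : a * n ≤ k) :
    binomialWeight θ n (k + 1) ≤ θ * (1 - a) / (a * (1 - θ)) * binomialWeight θ n k := by
  have hθ1' := sub_pos.2 hθ1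
  have hw := binomialWeight_nonneg hθ0 hθ1.le n k
  rcases lt_or_ge k n with hkn | hnk
  · have hrec := succ_mul_one_sub_mul_binomialWeight_succ θ hkn
    have hlevel : a * (n - k) ≤ (1 - a) * (k + 1) := by nlinarith
    rw [div_mul_eq_mul_div, le_div_iff₀ (by positivity)]
    refine le_of_mul_le_mul_left ?_ (by positivity : (0 : ℝ) < k + 1)
    calc (k + 1 : ℝ) * (binomialWeight θ n (k + 1) * (a * (1 - θ)))
        = a * (n - k) * (θ * binomialWeight θ n k) := by linear_combination a * hrec
      _ ≤ (1 - a) * (k + 1) * (θ * binomialWeight θ n k) := by gcongr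
      _ = (k + 1) * (θ * (1 - a) * binomialWeight θ n k) := by ring
  · have hzero : binomialWeight θ n (k + 1) = 0 := by
      simp [binomialWeight, Nat.choose_eq_zero_of_lt (Nat.lt_succ_of_le hnk)]
    rw [hzero]
    have := sub_nonneg.2 ha1
    positivity

theorem sum_range_mul_le_of_succ_le_mul {r : ℝ} (hr0 : 0 ≤ r) (hr1 : r < 1) {v : ℕ → ℝ}
    (hv0 : 0 ≤ v 0) (hv : ∀ j, v (j + 1) ≤ r * v j) (N : ℕ) :
    ∑ j ∈ range N, j * v j ≤ r / (1 - r) ^ 2 * v 0 := by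
  have hgeom : ∀ j, v j ≤ r ^ j * v 0 := by
    intro j
    induction j with
    | zero => simp
    | succ j ih =>
      calc v (j + 1) ≤ r * v j := hv j
        _ ≤ r * (r ^ j * v 0) := mul_le_mul_of_nonneg_left ih hr0
        _ = r ^ (j + 1) * v 0 := by ring
  have hsum : HasSum (fun j : ℕ => j * r ^ j) (r / (1 - r) ^ 2) :=
    hasSum_coe_mul_geometric_of_norm_lt_one (by rwa [Real.norm_of_nonneg hr0])
  calc ∑ j ∈ range N, j * v j ≤ ∑ j ∈ range N, j * r ^ j * v 0 :=
        sum_le_sum fun j _ => by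
          rw [mul_assoc]; exact mul_le_mul_of_nonneg_left (hgeom j) j.cast_nonneg
    _ = (∑ j ∈ range N, j * r ^ j) * v 0 := (sum_mul _ _ _).symm
    _ ≤ r / (1 - r) ^ 2 * v 0 :=
        mul_le_mul_of_nonneg_right
          (sum_le_hasSum (L := SummationFilter.unconditional ℕ) _ (fun j _ => by positivity) hsum)
          hv0

theorem sum_Icc_mul_le_of_succ_le_mul {r : ℝ} (hr0 : 0 ≤ r) (hr1 : r < 1) {u : ℕ → ℝ} {m : ℕ}
    (hum : 0 ≤ u m) (hu : ∀ k, m ≤ k → u (k + 1) ≤ r * u k) (n : ℕ) :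
    ∑ k ∈ Icc m n, k * u k ≤ m * ∑ k ∈ Icc m n, u k + r / (1 - r) ^ 2 * u m := by
  have hexcess : ∑ k ∈ Icc m n, ((k : ℝ) - m) * u k ≤ r / (1 - r) ^ 2 * u m := by
    rw [← Finset.Ico_add_one_right_eq_Icc, sum_Ico_eq_sum_range]
    simpa using sum_range_mul_le_of_succ_le_mul hr0 hr1 (v := fun j => u (m + j)) hum
      (fun j => hu (m + j) (Nat.le_add_right m j)) (n + 1 - m)
  calc ∑ k ∈ Icc m n, k * u k
        = m * ∑ k ∈ Icc m n, u k + ∑ k ∈ Icc m n, ((k : ℝ) - m) * u k := by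
        rw [mul_sum, ← sum_add_distrib]
        exact sum_congr rfl fun k _ => by ring
    _ ≤ _ := by gcongr

noncomputable def binomialUpperTailMean (θ a : ℝ) (n : ℕ) : ℝ :=
  (∑ k ∈ range (n + 1) with a * n ≤ ((k : ℕ) : ℝ), (k : ℝ) * binomialWeight θ n k) /
    ∑ k ∈ range (n + 1) with a * n ≤ ((k : ℕ) : ℝ), binomialWeight θ n k

theorem filter_range_le_eq_Icc_ceil (x : ℝ) (n : ℕ) :
    {k ∈ range (n + 1) | x ≤ ((k : ℕ) : ℝ)} = Icc ⌈x⌉₊ n := by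
  ext k
  simp [Nat.ceil_le, and_comm]

theorem exists_binomialUpperTailMean_mem_Icc {θ a : ℝ} (hθ0 : 0 < θ) (hθa : θ < a) (ha1 : a ≤ 1) :
    ∃ C, ∀ n : ℕ, binomialUpperTailMean θ a n ∈ Set.Icc (a * n) (a * n + C) := by
  have hθ1 : θ < 1 := hθa.trans_le ha1
  have ha0 : 0 < a := hθ0.trans hθa
  have h1θ := sub_pos.2 hθ1
  have h1a := sub_nonneg.2 ha1
  set r := θ * (1 - a) / (a * (1 - θ))
  have hr0 : 0 ≤ r := by positivity
  have hr1 : r < 1 := by rw [div_lt_one (by positivity)]; nlinarith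
  refine ⟨1 + r / (1 - r) ^ 2, fun n => ?_⟩
  rw [binomialUpperTailMean, filter_range_le_eq_Icc_ceil]
  set m := ⌈a * n⌉₊
  have hmn : m ≤ n := Nat.ceil_le.2 (by nlinarith [n.cast_nonneg (α := ℝ)])
  have hm_lo : a * n ≤ m := Nat.le_ceil _
  have hm_hi : (m : ℝ) < a * n + 1 := Nat.ceil_lt_add_one (by positivity)
  have hw := binomialWeight_nonneg hθ0.le hθ1.le n
  have hwm : 0 < binomialWeight θ n m := binomialWeight_pos hθ0 hθ1 hmn
  have hwmD : binomialWeight θ n m ≤ ∑ k ∈ Icc m n, binomialWeight θ n k :=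
    single_le_sum (fun k _ => hw k) (by simp [hmn])
  have hD : 0 < ∑ k ∈ Icc m n, binomialWeight θ n k := hwm.trans_le hwmD
  have hlower : (m : ℝ) * ∑ k ∈ Icc m n, binomialWeight θ n k ≤
      ∑ k ∈ Icc m n, (k : ℝ) * binomialWeight θ n k := by
    rw [mul_sum]
    exact sum_le_sum fun k hk =>
      mul_le_mul_of_nonneg_right (by exact_mod_cast (mem_Icc.1 hk).1) (hw k)
  have hupper := sum_Icc_mul_le_of_succ_le_mul hr0 hr1 hwm.le
    (fun k hk => binomialWeight_succ_le hθ0.le hθ1 ha0 ha1 (hm_lo.trans (by exact_mod_cast hk))) n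
  rw [Set.mem_Icc, le_div_iff₀ hD, div_le_iff₀ hD]
  have hc : 0 ≤ r / (1 - r) ^ 2 := by positivity
  constructor <;> nlinarith

theorem tendsto_binomialUpperTailMean_div {θ a : ℝ} (hθ0 : 0 < θ) (hθa : θ < a) (ha1 : a ≤ 1) :
    Tendsto (fun n : ℕ => binomialUpperTailMean θ a n / n) atTop (𝓝 a) := by
  obtain ⟨C, hC⟩ := exists_binomialUpperTailMean_mem_Icc hθ0 hθa ha1
  have hlim : Tendsto (fun n : ℕ => a + C / n) atTop (𝓝 a) := by
    simpa using tendsto_const_nhds.add (tendsto_const_div_atTop_nhds_zero_nat C)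
  have hpos : ∀ᶠ n : ℕ in atTop, (0 : ℝ) < n :=
    tendsto_natCast_atTop_atTop.eventually_gt_atTop 0
  refine tendsto_of_tendsto_of_tendsto_of_le_of_le' tendsto_const_nhds hlim ?_ ?_
  · filter_upwards [hpos] with n hn
    rw [le_div_iff₀ hn]
    exact (hC n).1
  · filter_upwards [hpos] with n hn
    rw [div_le_iff₀ hn, add_mul, div_mul_cancel₀ _ hn.ne']
    exact (hC n).2

/-- for i.i.d. Bernoulli(θ) with `0 < θ < 3/4`, conditioning on the event
`{ (1/n) ∑_{i≤n} X_i ≥ 3/4 }` makes `Pr(X_1 = 1 | E_n)` converge to `3/4`; that is, the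
conditional law of `X_1` converges to Bernoulli(3/4), the I-projection of Bernoulli(θ)
onto `{Q : E_Q[X] ≥ 3/4}`. -/
theorem bernoulli_conditional_tilt_limit
    (θ : ℝ) (h0 : 0 < θ) (h34 : θ < 3 / 4) :
    Tendsto
      (fun n : ℕ =>
        (∑ x ∈ univ.filter
            (fun x : Fin n → Bool =>
              (∀ h : 0 < n, x ⟨0, h⟩ = true) ∧
                (3 / 4 : ℝ) * n ≤ ((univ.filter (fun i => x i = true)).card : ℝ)),
          ∏ i, (if x i then θ else 1 - θ))
        / (∑ x ∈ univ.filter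
            (fun x : Fin n → Bool =>
              (3 / 4 : ℝ) * n ≤ ((univ.filter (fun i => x i = true)).card : ℝ)),
          ∏ i, (if x i then θ else 1 - θ)))
      atTop (𝓝 (3 / 4)) := by
  refine (tendsto_binomialUpperTailMean_div h0 h34 (by norm_num)).congr' ?_
  filter_upwards [eventually_gt_atTop 0] with n hn
  have hfirst : ∀ x : Fin n → Bool, (∀ h : 0 < n, x ⟨0, h⟩ = true) ↔ x ⟨0, hn⟩ = true :=
    fun x => ⟨fun h => h hn, fun h _ => h⟩
  have hnum := card_mul_sum_prod_bernoulli_filter_mem_and θ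
    (fun k => 3 / 4 * (n : ℝ) ≤ k) (⟨0, hn⟩ : Fin n)
  have hden := sum_prod_bernoulli_filter_card (α := Fin n) θ (fun k => 3 / 4 * (n : ℝ) ≤ k)
  simp only [Fintype.card_fin] at hnum hden
  simp only [hfirst, hden, binomialUpperTailMean, ← hnum]
  rw [mul_div_assoc, mul_div_cancel_left₀ _ (by positivity)]
end

section
/- Among all probability densities on ℝ with mean m and variance v > 0 (second moment constraints), the differential entropy −∫ f log f is uniquely maximized by the Gaussian density N(m, v), with maximal entropy (1/2) log(2πev). -/
open MeasureTheory Real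

/-- The Gaussian density with mean `m` and variance `v`. -/
noncomputable def gaussDensity (m v : ℝ) : ℝ → ℝ :=
  fun x => (Real.sqrt (2 * π * v))⁻¹ * Real.exp (-(x - m) ^ 2 / (2 * v))

/-!
Gibbs' inequality: for densities `f`, `g` of equal mass, `∫ f log f - ∫ f log g = ∫ g · klFun (f / g)`
with `klFun t = t log t + 1 - t ≥ 0`, vanishing only at `t = 1`; so `∫ f log g ≤ ∫ f log f`, with
equality only if `f = g` a.e. For the Gaussian `g = N(m, v)`, `log g` is an affine function of
`(x - m)²`, so the cross term `∫ f log g` only depends on the mass and the variance of `f`: it equals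
`-(1/2) log (2πev)` for every admissible `f`, in particular for `f = g`.
-/

open ProbabilityTheory InformationTheory

lemma mul_log_sub_mul_log_sub_add_eq_mul_klFun {a b : ℝ} (hb : 0 < b) :
    a * log a - a * log b - a + b = b * klFun (a / b) := by
  rcases eq_or_ne a 0 with rfl | ha
  · simp [klFun]
  · rw [klFun, log_div ha hb.ne']
    field_simp
    ring

lemma mul_klFun_div_nonneg {a b : ℝ} (ha : 0 ≤ a) (hb : 0 < b) : 0 ≤ b * klFun (a / b) :=
  mul_nonneg hb.le (klFun_nonneg (div_nonneg ha hb.le))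

section Gibbs

variable {α : Type*} [MeasurableSpace α] {μ : Measure α} {f g : α → ℝ}

lemma integral_mul_log_sub_eq_integral_mul_klFun
    (hg : ∀ x, 0 < g x) (hfi : Integrable f μ) (hgi : Integrable g μ)
    (hfg : ∫ x, f x ∂μ = ∫ x, g x ∂μ) (hflf : Integrable (fun x => f x * log (f x)) μ)
    (hflg : Integrable (fun x => f x * log (g x)) μ) :
    Integrable (fun x => g x * klFun (f x / g x)) μ ∧
      ∫ x, f x * log (f x) ∂μ - ∫ x, f x * log (g x) ∂μ
        = ∫ x, g x * klFun (f x / g x) ∂μ := by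
  have hlog : Integrable (fun x => f x * log (f x) - f x * log (g x)) μ := hflf.sub hflg
  have hlog' : Integrable (fun x => f x * log (f x) - f x * log (g x) - f x) μ := hlog.sub hfi
  have hkl : (fun x => g x * klFun (f x / g x))
      = fun x => f x * log (f x) - f x * log (g x) - f x + g x := by
    funext x
    exact (mul_log_sub_mul_log_sub_add_eq_mul_klFun (hg x)).symm
  refine ⟨hkl ▸ hlog'.add hgi, ?_⟩
  rw [hkl, integral_add hlog' hgi, integral_sub hlog hfi, integral_sub hflf hflg, hfg]
  ring

theorem integral_mul_log_le_integral_mul_log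
    (hf : ∀ x, 0 ≤ f x) (hg : ∀ x, 0 < g x) (hfi : Integrable f μ) (hgi : Integrable g μ)
    (hfg : ∫ x, f x ∂μ = ∫ x, g x ∂μ) (hflf : Integrable (fun x => f x * log (f x)) μ)
    (hflg : Integrable (fun x => f x * log (g x)) μ) :
    ∫ x, f x * log (g x) ∂μ ≤ ∫ x, f x * log (f x) ∂μ := by
  have h := (integral_mul_log_sub_eq_integral_mul_klFun hg hfi hgi hfg hflf hflg).2
  have hkl : 0 ≤ ∫ x, g x * klFun (f x / g x) ∂μ :=
    integral_nonneg fun x => mul_klFun_div_nonneg (hf x) (hg x)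
  linarith

theorem ae_eq_of_integral_mul_log_eq
    (hf : ∀ x, 0 ≤ f x) (hg : ∀ x, 0 < g x) (hfi : Integrable f μ) (hgi : Integrable g μ)
    (hfg : ∫ x, f x ∂μ = ∫ x, g x ∂μ) (hflf : Integrable (fun x => f x * log (f x)) μ)
    (hflg : Integrable (fun x => f x * log (g x)) μ)
    (heq : ∫ x, f x * log (g x) ∂μ = ∫ x, f x * log (f x) ∂μ) :
    f =ᵐ[μ] g := by
  obtain ⟨hint, h⟩ := integral_mul_log_sub_eq_integral_mul_klFun hg hfi hgi hfg hflf hflg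
  have hzero : (fun x => g x * klFun (f x / g x)) =ᵐ[μ] 0 :=
    (integral_eq_zero_iff_of_nonneg (fun x => mul_klFun_div_nonneg (hf x) (hg x)) hint).mp
      (by linarith)
  filter_upwards [hzero] with x hx
  have := (klFun_eq_zero_iff (div_nonneg (hf x) (hg x).le)).mp
    ((mul_eq_zero.mp hx).resolve_left (hg x).ne')
  exact (div_eq_one_iff_eq (hg x).ne').mp this

end Gibbs

section Gaussian

variable {m v : ℝ}

lemma gaussDensity_eq_gaussianPDFReal (m : ℝ) (hv : 0 ≤ v) :
    gaussDensity m v = gaussianPDFReal m v.toNNReal := by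
  rw [gaussianPDFReal_def, Real.coe_toNNReal v hv]
  rfl

lemma gaussDensity_pos (m : ℝ) (hv : 0 < v) (x : ℝ) : 0 < gaussDensity m v x := by
  unfold gaussDensity
  positivity

lemma integrable_gaussDensity (m : ℝ) (hv : 0 ≤ v) : Integrable (gaussDensity m v) := by
  rw [gaussDensity_eq_gaussianPDFReal m hv]
  exact integrable_gaussianPDFReal m _

lemma integral_gaussDensity (m : ℝ) (hv : 0 < v) : ∫ x, gaussDensity m v x = 1 := by
  rw [gaussDensity_eq_gaussianPDFReal m hv.le]
  exact integral_gaussianPDFReal_eq_one m (Real.toNNReal_pos.mpr hv).ne'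

lemma integrable_sq_mul_gaussDensity (m : ℝ) (hv : 0 < v) :
    Integrable (fun x => (x - m) ^ 2 * gaussDensity m v x) := by
  have h := ((memLp_id_gaussianReal (μ := m) (v := v.toNNReal) 2).sub
    (memLp_const m)).integrable_sq
  rw [gaussianReal_of_var_ne_zero m (Real.toNNReal_pos.mpr hv).ne',
    integrable_withDensity_iff_integrable_smul' (measurable_gaussianPDF _ _)
      (ae_of_all _ fun _ => gaussianPDF_lt_top)] at h
  refine h.congr (ae_of_all _ fun x => ?_)
  simp [gaussianPDF, gaussianPDFReal_nonneg, gaussDensity_eq_gaussianPDFReal m hv.le, mul_comm]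

lemma integral_sq_mul_gaussDensity (m : ℝ) (hv : 0 < v) :
    ∫ x, (x - m) ^ 2 * gaussDensity m v x = v := by
  have h := variance_fun_id_gaussianReal (μ := m) (v := v.toNNReal)
  rw [variance_eq_integral measurable_id'.aemeasurable, integral_id_gaussianReal,
    integral_gaussianReal_eq_integral_smul (Real.toNNReal_pos.mpr hv).ne',
    Real.coe_toNNReal v hv.le] at h
  simpa [gaussDensity_eq_gaussianPDFReal m hv.le, mul_comm] using h

lemma log_gaussDensity (m : ℝ) (hv : 0 < v) (x : ℝ) :
    log (gaussDensity m v x) = -(1 / 2) * log (2 * π * v) - (x - m) ^ 2 / (2 * v) := by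
  rw [gaussDensity, log_mul (by positivity) (exp_ne_zero _), log_inv, log_exp,
    log_sqrt (by positivity)]
  ring

lemma mul_log_gaussDensity (m : ℝ) (hv : 0 < v) (f : ℝ → ℝ) :
    (fun x => f x * log (gaussDensity m v x))
      = fun x => -(1 / 2) * log (2 * π * v) * f x + -(1 / (2 * v)) * ((x - m) ^ 2 * f x) := by
  funext x
  rw [log_gaussDensity m hv]
  ring

variable {f : ℝ → ℝ}

lemma integrable_mul_log_gaussDensity (hv : 0 < v) (hfi : Integrable f)
    (h2i : Integrable (fun x => (x - m) ^ 2 * f x)) :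
    Integrable (fun x => f x * log (gaussDensity m v x)) := by
  rw [mul_log_gaussDensity m hv]
  exact (hfi.const_mul _).add (h2i.const_mul _)

lemma integral_mul_log_gaussDensity (hv : 0 < v) (hfi : Integrable f) (h1 : ∫ x, f x = 1)
    (h2i : Integrable (fun x => (x - m) ^ 2 * f x)) (h2 : ∫ x, (x - m) ^ 2 * f x = v) :
    ∫ x, f x * log (gaussDensity m v x) = -(1 / 2) * log (2 * π * exp 1 * v) := by
  rw [mul_log_gaussDensity m hv, integral_add (hfi.const_mul _) (h2i.const_mul _),
    integral_const_mul, integral_const_mul, h1, h2,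
    show 2 * π * exp 1 * v = 2 * π * v * exp 1 by ring, log_mul (by positivity) (exp_ne_zero 1),
    log_exp]
  field_simp
  ring

end Gaussian

/-- among all probability densities on ℝ with mean `m` and variance
`v > 0`, differential entropy `-∫ f log f` is uniquely (up to a.e. equality) maximized
by the Gaussian density `N(m, v)`, with maximal entropy `(1/2) log(2πev)`. -/
theorem gaussian_maximizes_differential_entropy
    (m v : ℝ) (hv : 0 < v) :
    (∀ f : ℝ → ℝ, (∀ x, 0 ≤ f x) → Integrable f →
        (∫ x, f x = 1) →
        Integrable (fun x => x * f x) → (∫ x, x * f x = m) →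
        Integrable (fun x => (x - m) ^ 2 * f x) → (∫ x, (x - m) ^ 2 * f x = v) →
        Integrable (fun x => f x * Real.log (f x)) →
        (-∫ x, f x * Real.log (f x)) ≤ (1 / 2) * Real.log (2 * π * Real.exp 1 * v)
        ∧ ((-∫ x, f x * Real.log (f x)) = (1 / 2) * Real.log (2 * π * Real.exp 1 * v) →
            f =ᵐ[volume] gaussDensity m v))
    ∧ (-∫ x, gaussDensity m v x * Real.log (gaussDensity m v x))
        = (1 / 2) * Real.log (2 * π * Real.exp 1 * v) := by
  have hg0 := gaussDensity_pos m hv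
  have hgi := integrable_gaussDensity m hv.le
  have hg1 := integral_gaussDensity m hv
  refine ⟨fun f hf0 hfi hf1 _ _ h2i h2 hflf => ?_, ?_⟩
  · have hflg := integrable_mul_log_gaussDensity hv hfi h2i
    have hcross := integral_mul_log_gaussDensity hv hfi hf1 h2i h2
    have hfg : ∫ x, f x = ∫ x, gaussDensity m v x := hf1.trans hg1.symm
    refine ⟨?_, fun heq => ?_⟩
    · linarith [integral_mul_log_le_integral_mul_log hf0 hg0 hfi hgi hfg hflf hflg]
    · exact ae_eq_of_integral_mul_log_eq hf0 hg0 hfi hgi hfg hflf hflg (by linarith)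
  · rw [integral_mul_log_gaussDensity hv hgi hg1 (integrable_sq_mul_gaussDensity m hv)
      (integral_sq_mul_gaussDensity m hv)]
    ring
end
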